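/- For the reverse Z channel, i.e. q = 0 and 0 < p < 1, and any 0 < θ < 1, the optimization values satisfy m_COMP(n,θ,p,0) ≥ m_DD(n,θ,p,0). -/

import Mathlib

open Real Set

noncomputable section

/-- KL divergence between Bernoulli(r) and Bernoulli(s) (natural log, boundary by continuity). -/
def klBer (r s : ℝ) : ℝ := r * Real.log (r / s) + (1 - r) * Real.log ((1 - r) / (1 - s))

def b1 (θ q α d : ℝ) : ℝ := θ / (1 - θ) * (1 / (d * klBer α q))

def b2 (θ p q α d : ℝ) : ℝ :=
  1 / (1 - θ) * (1 / (d * klBer α (Real.exp (-d) * (1 - p) + (1 - Real.exp (-d)) * q)))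

def compSet (θ p q : ℝ) : Set ℝ :=
  {x | ∃ d α : ℝ, 0 < d ∧
    α ∈ Set.Ioo q (Real.exp (-d) * (1 - p) + (1 - Real.exp (-d)) * q) ∧
    x = max (b1 θ q α d) (b2 θ p q α d)}

def wDD (p q d : ℝ) : ℝ := Real.exp (-d) * p + (1 - Real.exp (-d)) * (1 - q)

def c1 (θ q α d : ℝ) : ℝ := θ / (1 - θ) * (1 / (d * klBer α q))

def c2 (p q α d : ℝ) : ℝ := 1 / (d * klBer α (1 - wDD p q d))

def c3 (θ q β d : ℝ) : ℝ := θ / (1 - θ) * (1 / (d * klBer β ((1 - q) * Real.exp (-d))))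

def c4 (θ p q α β d : ℝ) : ℝ :=
  sSup {x | ∃ z ∈ Set.Icc (1 - α) 1,
    x = 1 / (1 - θ) * (1 / (d * (klBer z (wDD p q d) +
      (if β > z * (Real.exp (-d) * p) / wDD p q d then
        z * klBer (β / z) (Real.exp (-d) * p / wDD p q d) else 0))))}

def ddSet (θ p q : ℝ) : Set ℝ :=
  {x | ∃ d α β : ℝ, 0 < d ∧
    α ∈ Set.Ioo q (Real.exp (-d) * (1 - p) + (1 - Real.exp (-d)) * q) ∧
    β ∈ Set.Ioo 0 (Real.exp (-d) * (1 - q)) ∧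
    x = max (max (c1 θ q α d) (c2 p q α d)) (max (c3 θ q β d) (c4 θ p q α β d))}

/-- `m_COMP(n,θ,p,q)` for `k = ⌈n^θ⌉`. -/
def mCOMP (n : ℕ) (θ p q : ℝ) : ℝ :=
  sInf (compSet θ p q) *
    ((⌈(n : ℝ) ^ θ⌉₊ : ℝ) * Real.log (n / (⌈(n : ℝ) ^ θ⌉₊ : ℝ)))

/-- `m_DD(n,θ,p,q)` for `k = ⌈n^θ⌉`. -/
def mDD (n : ℕ) (θ p q : ℝ) : ℝ :=
  sInf (ddSet θ p q) *
    ((⌈(n : ℝ) ^ θ⌉₊ : ℝ) * Real.log (n / (⌈(n : ℝ) ^ θ⌉₊ : ℝ)))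


/-! Given a COMP-feasible pair `(d, α)`, keep `d` and `α` and add a small `β`. For `q = 0` the DD
threshold `1 - w` equals the COMP threshold `s = e^{-d}(1-p)`, so `c₁ = b₁` and `c₂ = (1-θ) b₂`.
Since `D(α‖s) = D(1-α‖w)` and `D(·‖w)` increases on `[w, 1]`, every `z ≥ 1-α` has
`D(z‖w) ≥ D(α‖s)`, whence `c₄ ≤ b₂`. Finally `D(β‖e^{-d}) → -log(1-e^{-d}) > D(α‖s)` as `β → 0⁺`,
so a small `β` gives `c₃ ≤ b₂`. -/

section klBer

variable {r s : ℝ}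

lemma mul_log_div_eq (r : ℝ) (hs : s ≠ 0) : r * log (r / s) = r * log r - r * log s := by
  rcases eq_or_ne r 0 with rfl | hr
  · simp
  · rw [log_div hr hs]; ring

lemma klBer_eq (r : ℝ) (hs0 : s ≠ 0) (hs1 : s ≠ 1) :
    klBer r s = r * log r + (1 - r) * log (1 - r) - r * log s - (1 - r) * log (1 - s) := by
  rw [klBer, mul_log_div_eq r hs0, mul_log_div_eq (1 - r) (sub_ne_zero.2 hs1.symm)]
  ring

lemma klBer_self (s : ℝ) : klBer s s = 0 := by
  rcases eq_or_ne s 0 with rfl | h0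
  · simp [klBer]
  rcases eq_or_ne s 1 with rfl | h1
  · simp [klBer]
  simp [klBer, div_self h0, div_self (sub_ne_zero.2 h1.symm)]

lemma klBer_one_sub_one_sub (r s : ℝ) : klBer (1 - r) (1 - s) = klBer r s := by
  rw [klBer, klBer, sub_sub_cancel, sub_sub_cancel]
  ring

lemma klBer_one (s : ℝ) : klBer 1 s = -log s := by
  simp [klBer, log_inv]

lemma klBer_zero (s : ℝ) : klBer 0 s = -log (1 - s) := by
  simp [klBer, log_inv]

lemma continuous_klBer_left (hs0 : s ≠ 0) (hs1 : s ≠ 1) : Continuous (klBer · s) := by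
  simp_rw [klBer_eq _ hs0 hs1]
  have := continuous_mul_log.comp (continuous_const.sub continuous_id : Continuous (1 - · : ℝ → ℝ))
  fun_prop

lemma hasDerivAt_klBer_left (hr0 : r ≠ 0) (hr1 : r ≠ 1) (hs0 : s ≠ 0) (hs1 : s ≠ 1) :
    HasDerivAt (klBer · s) (log r - log (1 - r) - log s + log (1 - s)) r := by
  have h₁ := hasDerivAt_mul_log hr0
  have h₂ := (hasDerivAt_mul_log (sub_ne_zero.2 hr1.symm)).comp r ((hasDerivAt_id r).const_sub 1)
  have hf : (klBer · s) =
      fun x ↦ x * log x + (1 - x) * log (1 - x) - x * log s - (1 - x) * log (1 - s) :=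
    funext fun x ↦ klBer_eq x hs0 hs1
  rw [hf]
  exact (((h₁.add h₂).sub ((hasDerivAt_id r).mul_const (log s))).sub
    (((hasDerivAt_id r).const_sub 1).mul_const (log (1 - s)))).congr_deriv (by ring)

lemma strictMonoOn_klBer_left (hs0 : 0 < s) (hs1 : s < 1) :
    StrictMonoOn (klBer · s) (Icc s 1) := by
  refine strictMonoOn_of_deriv_pos (convex_Icc s 1)
    (continuous_klBer_left hs0.ne' hs1.ne).continuousOn fun x hx ↦ ?_
  rw [interior_Icc] at hx
  obtain ⟨hsx, hx1⟩ := hx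
  rw [(hasDerivAt_klBer_left (hs0.trans hsx).ne' hx1.ne hs0.ne' hs1.ne).deriv]
  have := log_lt_log hs0 hsx
  have := log_lt_log (sub_pos.2 hx1) (sub_lt_sub_left hsx 1)
  linarith

lemma strictAntiOn_klBer_left (hs0 : 0 < s) (hs1 : s < 1) :
    StrictAntiOn (klBer · s) (Icc 0 s) := by
  intro a ha b hb hab
  simp only [← klBer_one_sub_one_sub _ s]
  exact strictMonoOn_klBer_left (by linarith) (by linarith)
    ⟨by linarith [hb.2], by linarith [hb.1]⟩ ⟨by linarith [ha.2], by linarith [ha.1]⟩ (by linarith)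

lemma klBer_pos (hr0 : 0 ≤ r) (hrs : r < s) (hs1 : s < 1) : 0 < klBer r s := by
  rw [← klBer_self s]
  exact strictAntiOn_klBer_left (hr0.trans_lt hrs) hs1 ⟨hr0, hrs.le⟩ ⟨hr0.trans hrs.le, le_rfl⟩ hrs

lemma klBer_nonneg (hr0 : 0 ≤ r) (hr1 : r ≤ 1) (hs0 : 0 < s) (hs1 : s < 1) : 0 ≤ klBer r s := by
  rcases le_or_gt s r with hsr | hrs
  · rw [← klBer_self s]
    exact (strictMonoOn_klBer_left hs0 hs1).monotoneOn ⟨le_rfl, hs1.le⟩ ⟨hsr, hr1⟩ hsr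
  · exact (klBer_pos hr0 hrs hs1).le

lemma klBer_le_neg_log_one_sub (hr0 : 0 ≤ r) (hrs : r ≤ s) (hs1 : s < 1) :
    klBer r s ≤ -log (1 - s) := by
  rcases hr0.eq_or_lt with rfl | hr0
  · rw [klBer_zero]
  rw [← klBer_zero]
  exact (strictAntiOn_klBer_left (hr0.trans_le hrs) hs1).antitoneOn ⟨le_rfl, by linarith⟩
    ⟨hr0.le, hrs⟩ hr0.le

open Filter Topology in
lemma exists_lt_klBer_of_lt_neg_log (hs0 : s ≠ 0) (hs1 : s ≠ 1) {y ε : ℝ}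
    (hy : y < -log (1 - s)) (hε : 0 < ε) : ∃ β ∈ Ioo 0 ε, y < klBer β s := by
  have hcont : Tendsto (klBer · s) (𝓝[>] 0) (𝓝 (-log (1 - s))) := by
    rw [← klBer_zero]
    exact (continuous_klBer_left hs0 hs1).continuousAt.tendsto.mono_left nhdsWithin_le_nhds
  obtain ⟨β, hβy, hβε, hβ0⟩ := ((hcont.eventually_const_lt hy).and
    (((eventually_lt_nhds hε).filter_mono nhdsWithin_le_nhds).and self_mem_nhdsWithin)).exists
  exact ⟨β, ⟨hβ0, hβε⟩, hβy⟩

end klBer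

lemma csInf_le_csInf_of_forall_exists_le {α : Type*} [ConditionallyCompleteLattice α]
    {s t : Set α} (hs : BddBelow s) (ht : t.Nonempty) (h : ∀ x ∈ t, ∃ y ∈ s, y ≤ x) :
    sInf s ≤ sInf t :=
  le_csInf ht fun x hx ↦ let ⟨_, hy, hyx⟩ := h x hx; (csInf_le hs hy).trans hyx

lemma natCeil_rpow_mul_log_div_nonneg {θ : ℝ} (hθ : θ ≤ 1) (n : ℕ) :
    0 ≤ (⌈(n : ℝ) ^ θ⌉₊ : ℝ) * log (n / (⌈(n : ℝ) ^ θ⌉₊ : ℝ)) := by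
  rcases n.eq_zero_or_pos with rfl | hn
  · simp
  have hn1 : (1 : ℝ) ≤ n := by exact_mod_cast hn
  have hk : (0 : ℝ) < ⌈(n : ℝ) ^ θ⌉₊ := by
    exact_mod_cast Nat.ceil_pos.2 (rpow_pos_of_pos (by linarith) θ)
  have hkn : (⌈(n : ℝ) ^ θ⌉₊ : ℝ) ≤ n := by
    exact_mod_cast Nat.ceil_le.2 ((rpow_le_rpow_of_exponent_le hn1 hθ).trans_eq (rpow_one _))
  exact mul_nonneg hk.le (log_nonneg ((one_le_div hk).2 hkn))

section ReverseZ

variable {θ p d α β : ℝ}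

lemma wDD_zero (p d : ℝ) : wDD p 0 d = 1 - exp (-d) * (1 - p) := by
  rw [wDD]; ring

lemma b2_zero (θ p α d : ℝ) :
    b2 θ p 0 α d = 1 / (1 - θ) * (1 / (d * klBer α (exp (-d) * (1 - p)))) := by
  simp [b2]

lemma c2_zero (p α d : ℝ) : c2 p 0 α d = 1 / (d * klBer α (exp (-d) * (1 - p))) := by
  rw [c2, wDD_zero, sub_sub_cancel]

lemma exp_neg_mul_one_sub_lt_one (hp0 : 0 ≤ p) (hd : 0 < d) : exp (-d) * (1 - p) < 1 := by
  have : exp (-d) < 1 := exp_lt_one_iff.2 (by linarith)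
  nlinarith [exp_pos (-d)]

lemma c2_le_b2 (hθ0 : 0 ≤ θ) (hθ1 : θ < 1) (hd : 0 < d)
    (hK : 0 ≤ klBer α (exp (-d) * (1 - p))) : c2 p 0 α d ≤ b2 θ p 0 α d := by
  rw [c2_zero, b2_zero]
  exact le_mul_of_one_le_left (one_div_nonneg.2 (mul_nonneg hd.le hK))
    (one_le_one_div (by linarith) (by linarith))

lemma c3_le_b2 (hθ0 : 0 < θ) (hθ1 : θ < 1) (hd : 0 < d)
    (hK : 0 < klBer α (exp (-d) * (1 - p)))
    (hβ : θ * klBer α (exp (-d) * (1 - p)) < klBer β (exp (-d))) :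
    c3 θ 0 β d ≤ b2 θ p 0 α d := by
  rw [c3, b2_zero, sub_zero, one_mul]
  have : 0 < 1 - θ := by linarith
  calc θ / (1 - θ) * (1 / (d * klBer β (exp (-d))))
      ≤ θ / (1 - θ) * (1 / (d * (θ * klBer α (exp (-d) * (1 - p))))) := by gcongr
    _ = 1 / (1 - θ) * (1 / (d * klBer α (exp (-d) * (1 - p)))) := by field_simp

lemma c4_le_b2 (hθ1 : θ < 1) (hp0 : 0 < p) (hd : 0 < d)
    (hα : α ∈ Ioo 0 (exp (-d) * (1 - p))) (hβ0 : 0 < β) (hβα : β < 1 - α) :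
    c4 θ p 0 α β d ≤ b2 θ p 0 α d := by
  set s := exp (-d) * (1 - p)
  obtain ⟨hα0, hαs⟩ := hα
  have hs1 : s < 1 := exp_neg_mul_one_sub_lt_one hp0.le hd
  have hK : 0 < klBer α s := klBer_pos hα0.le hαs hs1
  have hb2 : 0 ≤ b2 θ p 0 α d := by
    rw [b2_zero]; exact mul_nonneg (by bound) (one_div_nonneg.2 (by positivity))
  refine Real.sSup_le ?_ hb2
  rintro _ ⟨z, ⟨hαz, hz1⟩, rfl⟩
  have hw : wDD p 0 d = 1 - s := wDD_zero p d
  have hz0 : 0 < z := by linarith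
  have hKz : klBer α s ≤ klBer z (wDD p 0 d) := by
    rw [hw, ← klBer_one_sub_one_sub α]
    exact (strictMonoOn_klBer_left (by linarith) (by linarith)).monotoneOn
      ⟨by linarith, by linarith⟩ ⟨by linarith, hz1⟩ hαz
  have hratio : exp (-d) * p / wDD p 0 d ∈ Ioo 0 1 := by
    have : exp (-d) < 1 := exp_lt_one_iff.2 (by linarith)
    have : 0 < 1 - s := by linarith
    refine ⟨div_pos (by positivity) (by linarith), (div_lt_one (by linarith)).2 ?_⟩
    rw [hw]; nlinarith
  have hE : 0 ≤ if β > z * (exp (-d) * p) / wDD p 0 d then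
      z * klBer (β / z) (exp (-d) * p / wDD p 0 d) else 0 := by
    split_ifs
    · exact mul_nonneg hz0.le (klBer_nonneg (by positivity)
        ((div_le_one hz0).2 (by linarith)) hratio.1 hratio.2)
    · exact le_rfl
  rw [b2_zero]
  gcongr
  linarith

lemma ddSet_zero_nonneg (hp0 : 0 ≤ p) : ∀ x ∈ ddSet θ p 0, 0 ≤ x := by
  rintro _ ⟨d, α, β, hd, hα, -, rfl⟩
  simp only [mul_zero, add_zero] at hα
  have hc2 : 0 ≤ c2 p 0 α d := by
    rw [c2_zero]
    exact one_div_nonneg.2 (mul_nonneg hd.le (klBer_nonneg hα.1.le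
      (hα.2.trans (exp_neg_mul_one_sub_lt_one hp0 hd)).le (hα.1.trans hα.2)
      (exp_neg_mul_one_sub_lt_one hp0 hd)))
  exact hc2.trans ((le_max_right _ _).trans (le_max_left _ _))

lemma compSet_zero_nonempty (hp1 : p < 1) : (compSet θ p 0).Nonempty := by
  have : 0 < exp (-1) * (1 - p) := mul_pos (exp_pos _) (by linarith)
  refine ⟨_, 1, exp (-1) * (1 - p) / 2, one_pos, ?_, rfl⟩
  simp only [mul_zero, add_zero]
  constructor <;> linarith

lemma exists_mem_ddSet_le_of_mem_compSet (hp0 : 0 < p) (hθ0 : 0 < θ) (hθ1 : θ < 1) {x : ℝ}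
    (hx : x ∈ compSet θ p 0) : ∃ y ∈ ddSet θ p 0, y ≤ x := by
  obtain ⟨d, α, hd, hα, rfl⟩ := hx
  simp only [mul_zero, add_zero] at hα
  set s := exp (-d) * (1 - p)
  have hs1 : s < 1 := exp_neg_mul_one_sub_lt_one hp0.le hd
  have hK : 0 < klBer α s := klBer_pos hα.1.le hα.2 hs1
  have hc1 : exp (-d) < 1 := exp_lt_one_iff.2 (by linarith)
  have hθK : θ * klBer α s < -log (1 - exp (-d)) := calc
    θ * klBer α s ≤ klBer α s := mul_le_of_le_one_left hK.le hθ1.le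
    _ ≤ -log (1 - s) := klBer_le_neg_log_one_sub hα.1.le hα.2.le hs1
    _ < -log (1 - exp (-d)) := by
      have : s < exp (-d) := by nlinarith [exp_pos (-d)]
      exact neg_lt_neg (log_lt_log (by linarith) (by linarith))
  obtain ⟨β, ⟨hβ0, hβ⟩, hβK⟩ := exists_lt_klBer_of_lt_neg_log (exp_pos _).ne' hc1.ne hθK
    (lt_min (exp_pos (-d)) (by linarith [hα.2] : 0 < 1 - α))
  refine ⟨_, ⟨d, α, β, hd, by simpa using hα,
    by simpa using ⟨hβ0, hβ.trans_le (min_le_left _ _)⟩, rfl⟩,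
    max_le (max_le (le_max_left _ _) ?_) (max_le ?_ ?_)⟩ <;> refine le_trans ?_ (le_max_right _ _)
  · exact c2_le_b2 hθ0.le hθ1 hd hK.le
  · exact c3_le_b2 hθ0 hθ1 hd hK hβK
  · exact c4_le_b2 hθ1 hp0 hd hα hβ0 (hβ.trans_le (min_le_right _ _))

end ReverseZ

/-- **DD dominates COMP on the reverse Z channel** (Corollary 2.14).  For `q = 0` and
`0 < p < 1`, `m_COMP(n,θ,p,0) ≥ m_DD(n,θ,p,0)`. -/
theorem comp_ge_dd_revZ
    (p θ : ℝ) (hp0 : 0 < p) (hp1 : p < 1) (hθ0 : 0 < θ) (hθ1 : θ < 1) :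
    ∀ n : ℕ, mDD n θ p 0 ≤ mCOMP n θ p 0 := by
  intro n
  have key : sInf (ddSet θ p 0) ≤ sInf (compSet θ p 0) :=
    csInf_le_csInf_of_forall_exists_le ⟨0, ddSet_zero_nonneg hp0.le⟩ (compSet_zero_nonempty hp1)
      fun _ ↦ exists_mem_ddSet_le_of_mem_compSet hp0 hθ0 hθ1
  exact mul_le_mul_of_nonneg_right key (natCeil_rpow_mul_log_div_nonneg hθ1.le n)

end
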